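/- arXiv:2207.02355 — 6 statements merged into one kernel-verified Lean document; each statement's English description precedes it below -/
import Mathlib

section
/- Let (Σ_G, *_G, emp_G) and (Σ_L, *_L, emp_L) be separation algebras, and let Σ be a set with emp_G × emp_L ⊆ Σ ⊆ Σ_G × Σ_L that is closed under decomposition: whenever g₁ #_G g₂, l₁ #_L l₂ and (g₁ *_G g₂, l₁ *_L l₂) ∈ Σ, also (g₁, l₁) ∈ Σ. Define composition on Σ componentwise: (g₁, l₁) * (g₂, l₂) := (g₁ *_G g₂, l₁ *_L l₂), defined exactly when both component products are defined and the resulting pair lies in Σ. Then (Σ, *, emp_G × emp_L) is a separation algebra. -/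
/-!
Commutativity and units are inherited componentwise, the units lying in `Σ` because
`emp_G × emp_L ⊆ Σ`. For associativity, by commutativity it suffices to show that
`(x * y) * z = w` implies `x * (y * z) = w`. Regrouping in each component gives the
candidate `y * z = (g, l)`, and `(g, l)` lies in `Σ` because `x * (g, l) = w ∈ Σ`
and `Σ` is closed under decomposition.
-/

open Classical

/-- A separation algebra: a partial commutative monoid with a set of units.
The partial binary operation is modeled as an `Option`-valued function;
`op a b = some c` means the composition is defined and equals `c`. -/
structure SepAlg (α : Type) : Type where
  op : α → α → Option α
  emp : Set α
  comm : ∀ a b : α, op a b = op b a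
  assoc : ∀ a b c : α,
    (op a b).bind (fun x => op x c) = (op b c).bind (fun y => op a y)
  unit_exists : ∀ a : α, ∃ u ∈ emp, op a u = some a
  unit_undef : ∀ u u' : α, u ∈ emp → u' ∈ emp → u ≠ u' → op u u' = none

/-- Componentwise composition on the subset `S` of the product of the carriers:
defined exactly when both component products are defined and the resulting pair
lies in `S`. -/
noncomputable def pOp {G L : Type} (A : SepAlg G) (B : SepAlg L) {S : Set (G × L)}
    (x y : { p : G × L // p ∈ S }) : Option { p : G × L // p ∈ S } :=
  match A.op x.1.1 y.1.1, B.op x.1.2 y.1.2 with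
  | some g, some l => if h : (g, l) ∈ S then some ⟨(g, l), h⟩ else none
  | _, _ => none

theorem Option.bind_assoc_of_comm {α : Type} {op : α → α → Option α}
    (comm : ∀ a b, op a b = op b a)
    (h : ∀ a b c w, ((op a b).bind fun x => op x c) = some w →
      ((op b c).bind fun y => op a y) = some w)
    (a b c : α) : ((op a b).bind fun x => op x c) = (op b c).bind fun y => op a y := by
  refine Option.ext fun w => ⟨h a b c w, fun hw => ?_⟩
  have hcba : ((op c b).bind fun x => op x a) = some w := by
    simpa only [comm _ a, comm c b] using hw
  simpa only [comm b a, comm c] using h c b a w hcba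

theorem SepAlg.exists_op_right_of_op_left {α : Type} (A : SepAlg α) {a b c ab abc : α}
    (hab : A.op a b = some ab) (habc : A.op ab c = some abc) :
    ∃ bc, A.op b c = some bc ∧ A.op a bc = some abc := by
  have h := A.assoc a b c
  rw [hab, Option.bind_some, habc] at h
  exact Option.bind_eq_some_iff.mp h.symm

section pOp

variable {G L : Type} (A : SepAlg G) (B : SepAlg L) {S : Set (G × L)}

theorem pOp_eq_some_iff (x y z : S) :
    pOp A B x y = some z ↔
      A.op x.1.1 y.1.1 = some z.1.1 ∧ B.op x.1.2 y.1.2 = some z.1.2 := by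
  unfold pOp
  rcases A.op x.1.1 y.1.1 with _ | g <;> rcases B.op x.1.2 y.1.2 with _ | l <;> simp only
    [reduceCtorEq, Option.some_inj, false_and, and_false]
  split_ifs with hS
  · simp [Subtype.ext_iff, Prod.ext_iff]
  · simp only [false_iff, not_and]
    rintro rfl rfl
    exact hS z.2

theorem pOp_comm (x y : S) : pOp A B x y = pOp A B y x := by
  unfold pOp
  rw [A.comm, B.comm]

theorem pOp_assoc_of_eq_some
    (hdec : ∀ (g₁ g₂ : G) (l₁ l₂ : L) (g : G) (l : L),
      A.op g₁ g₂ = some g → B.op l₁ l₂ = some l → (g, l) ∈ S → (g₁, l₁) ∈ S)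
    (x y z w : S) (h : ((pOp A B x y).bind fun v => pOp A B v z) = some w) :
    ((pOp A B y z).bind fun v => pOp A B x v) = some w := by
  obtain ⟨xy, hxy, hw⟩ := Option.bind_eq_some_iff.mp h
  rw [pOp_eq_some_iff] at hxy hw
  obtain ⟨g, hg, hgw⟩ := A.exists_op_right_of_op_left hxy.1 hw.1
  obtain ⟨l, hl, hlw⟩ := B.exists_op_right_of_op_left hxy.2 hw.2
  have hS : (g, l) ∈ S := hdec g x.1.1 l x.1.2 w.1.1 w.1.2
    (by rwa [A.comm]) (by rwa [B.comm]) w.2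
  exact Option.bind_eq_some_iff.mpr ⟨⟨(g, l), hS⟩, (pOp_eq_some_iff A B _ _ _).mpr ⟨hg, hl⟩,
    (pOp_eq_some_iff A B _ _ _).mpr ⟨hgw, hlw⟩⟩

theorem pOp_eq_none_of_mem_emp {u u' : S} (hu : u.1.1 ∈ A.emp ∧ u.1.2 ∈ B.emp)
    (hu' : u'.1.1 ∈ A.emp ∧ u'.1.2 ∈ B.emp) (hne : u ≠ u') : pOp A B u u' = none := by
  refine Option.eq_none_iff_forall_ne_some.mpr fun z hz => hne ?_
  rw [pOp_eq_some_iff] at hz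
  have hg : u.1.1 = u'.1.1 := by
    by_contra h
    simp [A.unit_undef _ _ hu.1 hu'.1 h] at hz
  have hl : u.1.2 = u'.1.2 := by
    by_contra h
    simp [B.unit_undef _ _ hu.2 hu'.2 h] at hz
  exact Subtype.ext (Prod.ext hg hl)

theorem exists_mem_emp_pOp_eq_some_self (hemp : ∀ g ∈ A.emp, ∀ l ∈ B.emp, (g, l) ∈ S)
    (x : S) : ∃ u : S, (u.1.1 ∈ A.emp ∧ u.1.2 ∈ B.emp) ∧ pOp A B x u = some x := by
  obtain ⟨ug, hug, hg⟩ := A.unit_exists x.1.1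
  obtain ⟨ul, hul, hl⟩ := B.unit_exists x.1.2
  exact ⟨⟨(ug, ul), hemp ug hug ul hul⟩, ⟨hug, hul⟩, (pOp_eq_some_iff A B _ _ _).mpr ⟨hg, hl⟩⟩

end pOp

/-- if `(Σ_G, *_G, emp_G)` and `(Σ_L, *_L, emp_L)` are separation
algebras and `emp_G × emp_L ⊆ Σ ⊆ Σ_G × Σ_L` is closed under decomposition,
then `Σ` with componentwise composition and units `emp_G × emp_L` is a
separation algebra. -/
theorem stmt0 {G L : Type} (A : SepAlg G) (B : SepAlg L) (S : Set (G × L))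
    (hemp : ∀ g ∈ A.emp, ∀ l ∈ B.emp, (g, l) ∈ S)
    (hdec : ∀ (g₁ g₂ : G) (l₁ l₂ : L) (g : G) (l : L),
      A.op g₁ g₂ = some g → B.op l₁ l₂ = some l → (g, l) ∈ S → (g₁, l₁) ∈ S) :
    ∃ P : SepAlg { p : G × L // p ∈ S },
      P.op = pOp A B ∧
      P.emp = { x : { p : G × L // p ∈ S } | x.1.1 ∈ A.emp ∧ x.1.2 ∈ B.emp } := by
  refine ⟨{ op := pOp A B
            emp := { x | x.1.1 ∈ A.emp ∧ x.1.2 ∈ B.emp }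
            comm := pOp_comm A B
            assoc := Option.bind_assoc_of_comm (pOp_comm A B) (pOp_assoc_of_eq_some A B hdec)
            unit_exists := exists_mem_emp_pOp_eq_some_self A B hemp
            unit_undef := fun _ _ => pOp_eq_none_of_mem_emp A B }, rfl, rfl⟩
end

section
/- Let Σ be a separation algebra with command semantics as below. (f-seq) If ⟦c₁⟧ is local and wp(c₁)(wp(c₂)(o)) ⊆ wp(c)(o), then ⟨p⟩ c₁ ⟨q⟩ * ⟨q⟩ c₂ ⟨o⟩ ⊆ ⟨p⟩ c ⟨o⟩. (f-frame) If ⟦c⟧ is local, then for all predicates p, q, o: ⟨p⟩ c ⟨q⟩ ⊆ ⟨p * o⟩ c ⟨q * o⟩. -/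
open Classical

/-- Separating conjunction of predicates. -/
def SepAlg.sepConj {α : Type} (A : SepAlg α) (p q : Set α) : Set α :=
  { s | ∃ a ∈ p, ∃ b ∈ q, A.op a b = some s }

/-- Separating implication of predicates: `p -* q = { s | {s} * p ⊆ q }`. -/
def SepAlg.sepImp {α : Type} (A : SepAlg α) (p q : Set α) : Set α :=
  { s | ∀ a ∈ p, ∀ t : α, A.op s a = some t → t ∈ q }

/-- Lifting of a command semantics to predicates (post-image). -/
def postP {β : Type} (f : β → Set β) (p : Set β) : Set β :=
  { t | ∃ s ∈ p, t ∈ f s }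

/-- Locality of a command semantics with respect to a separation algebra. -/
def IsLocalCmd {α : Type} (A : SepAlg α) (f : α → Set α) : Prop :=
  ∀ p q o : Set α, postP f p ⊆ q → postP f (A.sepConj p o) ⊆ A.sepConj q o

/-- Weakest precondition. -/
def wpre {α : Type} (f : α → Set α) (q : Set α) : Set α := { s | f s ⊆ q }

/-- The future predicate `⟨p⟩ c ⟨q⟩ := p -* wp(c)(q)`. -/
def fut {α : Type} (A : SepAlg α) (f : α → Set α) (p q : Set α) : Set α :=
  A.sepImp p (wpre f q)

/-!
Both rules are inclusions in the quantale of predicates. By the adjunction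
`X ⊆ p -* r ↔ X * p ⊆ r` it suffices to bound `X * p`; commutativity and associativity of `*`
bring each future next to its precondition, where modus ponens `(p -* r) * p ⊆ r` fires, and
locality enters only as the frame inclusion `wp(c)(q) * o ⊆ wp(c)(q * o)`.
-/

namespace SepAlg

variable {α : Type} (A : SepAlg α)

theorem exists_op_right_of_op_left_s3 {a b c x t : α} (hab : A.op a b = some x)
    (hxc : A.op x c = some t) : ∃ y, A.op b c = some y ∧ A.op a y = some t := by
  have h := A.assoc a b c
  rw [hab, Option.bind_some, hxc] at h
  exact Option.bind_eq_some_iff.mp h.symm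

theorem exists_op_left_of_op_right {a b c y t : α} (hbc : A.op b c = some y)
    (hay : A.op a y = some t) : ∃ x, A.op a b = some x ∧ A.op x c = some t := by
  have h := A.assoc a b c
  rw [hbc, Option.bind_some, hay] at h
  exact Option.bind_eq_some_iff.mp h

theorem sepConj_comm (p q : Set α) : A.sepConj p q = A.sepConj q p := by
  ext s
  constructor <;>
  · rintro ⟨a, ha, b, hb, hab⟩
    exact ⟨b, hb, a, ha, A.comm a b ▸ hab⟩

theorem sepConj_assoc (p q r : Set α) :
    A.sepConj (A.sepConj p q) r = A.sepConj p (A.sepConj q r) := by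
  ext t
  constructor
  · rintro ⟨x, ⟨a, ha, b, hb, hab⟩, c, hc, hxc⟩
    obtain ⟨y, hbc, hay⟩ := A.exists_op_right_of_op_left_s3 hab hxc
    exact ⟨a, ha, y, ⟨b, hb, c, hc, hbc⟩, hay⟩
  · rintro ⟨a, ha, y, ⟨b, hb, c, hc, hbc⟩, hay⟩
    obtain ⟨x, hab, hxc⟩ := A.exists_op_left_of_op_right hbc hay
    exact ⟨x, ⟨a, ha, b, hb, hab⟩, c, hc, hxc⟩

theorem sepConj_right_comm (p q r : Set α) :
    A.sepConj (A.sepConj p q) r = A.sepConj (A.sepConj p r) q := by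
  rw [sepConj_assoc, sepConj_comm A q, ← sepConj_assoc]

theorem sepConj_mono {p p' q q' : Set α} (hp : p ⊆ p') (hq : q ⊆ q') :
    A.sepConj p q ⊆ A.sepConj p' q' := by
  rintro s ⟨a, ha, b, hb, hab⟩
  exact ⟨a, hp ha, b, hq hb, hab⟩

theorem subset_sepImp_iff {x p r : Set α} : x ⊆ A.sepImp p r ↔ A.sepConj x p ⊆ r := by
  constructor
  · rintro h t ⟨s, hs, a, ha, hst⟩
    exact h hs a ha t hst
  · intro h s hs a ha t hst
    exact h ⟨s, hs, a, ha, hst⟩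

theorem sepConj_sepImp_subset (p r : Set α) : A.sepConj (A.sepImp p r) p ⊆ r :=
  A.subset_sepImp_iff.mp subset_rfl

end SepAlg

theorem wpre_mono {α : Type} (f : α → Set α) {q r : Set α} (h : q ⊆ r) :
    wpre f q ⊆ wpre f r :=
  fun _ hs => hs.trans h

theorem IsLocalCmd.sepConj_wpre_subset {α : Type} {A : SepAlg α} {f : α → Set α}
    (hf : IsLocalCmd A f) (q o : Set α) : A.sepConj (wpre f q) o ⊆ wpre f (A.sepConj q o) :=
  fun t ht _ hx => hf (wpre f q) q o (fun _ ⟨_, hs, hy⟩ => hs hy) ⟨t, ht, hx⟩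

/-- the rules f-seq and f-frame for futures, assuming locality. -/
theorem stmt3 {α : Type} (A : SepAlg α) :
    (∀ c c₁ c₂ : α → Set α, IsLocalCmd A c₁ →
      ∀ p q o : Set α, wpre c₁ (wpre c₂ o) ⊆ wpre c o →
        A.sepConj (fut A c₁ p q) (fut A c₂ q o) ⊆ fut A c p o) ∧
    (∀ c : α → Set α, IsLocalCmd A c →
      ∀ p q o : Set α, fut A c p q ⊆ fut A c (A.sepConj p o) (A.sepConj q o)) := by
  refine ⟨fun c c₁ c₂ hloc p q o hwp => A.subset_sepImp_iff.mpr ?_,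
    fun c hloc p q o => A.subset_sepImp_iff.mpr ?_⟩
  · calc A.sepConj (A.sepConj (fut A c₁ p q) (fut A c₂ q o)) p
        = A.sepConj (A.sepConj (fut A c₁ p q) p) (fut A c₂ q o) := A.sepConj_right_comm _ _ _
      _ ⊆ A.sepConj (wpre c₁ q) (fut A c₂ q o) :=
          A.sepConj_mono (A.sepConj_sepImp_subset _ _) subset_rfl
      _ ⊆ wpre c₁ (A.sepConj q (fut A c₂ q o)) := hloc.sepConj_wpre_subset _ _
      _ = wpre c₁ (A.sepConj (fut A c₂ q o) q) := by rw [A.sepConj_comm]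
      _ ⊆ wpre c₁ (wpre c₂ o) := wpre_mono c₁ (A.sepConj_sepImp_subset _ _)
      _ ⊆ wpre c o := hwp
  · calc A.sepConj (fut A c p q) (A.sepConj p o)
        = A.sepConj (A.sepConj (fut A c p q) p) o := (A.sepConj_assoc _ _ _).symm
      _ ⊆ A.sepConj (wpre c q) o := A.sepConj_mono (A.sepConj_sepImp_subset _ _) subset_rfl
      _ ⊆ wpre c (A.sepConj q o) := hloc.sepConj_wpre_subset _ _
end

section
/- Let ⟦c⟧ be a local command semantics on a separation algebra Σ, lifted to computation histories. If f ⊆ Σ⁺ is frameable, then for every history predicate a ⊆ Σ⁺: ⟦c⟧(a * f) ⊆ ⟦c⟧(a) * f. -/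
open Classical

/-- Pointwise lifting of a partial composition to lists (defined iff the lists
have equal length and are pointwise composable). -/
def listOp {β : Type} (f : β → β → Option β) : List β → List β → Option (List β)
  | [], [] => some []
  | a :: as, b :: bs => do
      let c ← f a b
      let cs ← listOp f as bs
      pure (c :: cs)
  | _, _ => none

/-- Separating conjunction of history predicates. -/
def hSep {β : Type} (f : β → β → Option β) (a b : Set (List β)) : Set (List β) :=
  { σ | ∃ τ₁ ∈ a, ∃ τ₂ ∈ b, listOp f τ₁ τ₂ = some σ }

/-- Separating implication of history predicates (restricted to nonempty
sequences, i.e. to Σ⁺). -/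
def hSepImp {β : Type} (f : β → β → Option β) (a b : Set (List β)) : Set (List β) :=
  { σ | σ ≠ [] ∧ ∀ τ ∈ a, ∀ ρ : List β, listOp f σ τ = some ρ → ρ ∈ b }

/-- Frameable history predicates: closed under duplicating the last state. -/
def Frameable {β : Type} (a : Set (List β)) : Prop :=
  ∀ (σ : List β) (s : β), σ ++ [s] ∈ a → σ ++ [s, s] ∈ a

/-- The now predicate `now(p)`. -/
def nowP {α : Type} (p : Set α) : Set (List α) :=
  { σ | ∃ (ρ : List α) (s : α), s ∈ p ∧ σ = ρ ++ [s] }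

/-- The past predicate `past(p)`. -/
def pastP {α : Type} (p : Set α) : Set (List α) :=
  { σ | ∃ (ρ₁ : List α) (s : α) (ρ₂ : List α), s ∈ p ∧ σ = ρ₁ ++ s :: ρ₂ }

/-- Lifting of a command semantics to computation histories. -/
def lsem {α : Type} (f : α → Set α) (σ : List α) : Set (List α) :=
  { τ | ∃ (ρ : List α) (s₁ s₂ : α), σ = ρ ++ [s₁] ∧ s₂ ∈ f s₁ ∧ τ = ρ ++ [s₁, s₂] }

/-- Weakest precondition on history predicates (over Σ⁺, i.e. nonempty sequences). -/
def hwp {α : Type} (f : α → Set α) (a : Set (List α)) : Set (List α) :=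
  { σ | σ ≠ [] ∧ lsem f σ ⊆ a }

/-!
Split the final state of a composed history `σ₁ * σ₂` as `t * u`. Locality of `⟦c⟧`, applied
with the frame `{u}`, lets the step `t * u ↦ s₂` be performed on `t` alone, giving `t ↦ t'` with
`t' * u = s₂`. So the extended history is `⟦c⟧(σ₁) * (σ₂ · u)`, and `σ₂ · u ∈ f` because `f` is
frameable: the frame stutters while the command runs.
-/

section ListOp

variable {β : Type} (op : β → β → Option β)

-- Holds without any length hypothesis: if the lengths differ, both sides are `none`.
theorem listOp_append_singleton (as bs : List β) (a b : β) :
    listOp op (as ++ [a]) (bs ++ [b]) =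
      (listOp op as bs).bind fun cs => (op a b).map fun c => cs ++ [c] := by
  induction as generalizing bs with
  | nil =>
    cases bs with
    | nil => simp only [List.nil_append, listOp]; cases op a b <;> rfl
    | cons => simp [listOp]
  | cons x xs ih =>
    cases bs with
    | nil => cases xs <;> simp [listOp]
    | cons y ys =>
      simp only [List.cons_append, listOp, ih]
      cases op x y <;> cases listOp op xs ys <;> cases op a b <;> simp

theorem exists_of_listOp_eq_some_append_singleton {σ₁ σ₂ γ : List β} {s : β}
    (h : listOp op σ₁ σ₂ = some (γ ++ [s])) :
    ∃ ρ₁ t ρ₂ u, σ₁ = ρ₁ ++ [t] ∧ σ₂ = ρ₂ ++ [u] ∧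
      listOp op ρ₁ ρ₂ = some γ ∧ op t u = some s := by
  rcases σ₁.eq_nil_or_concat' with rfl | ⟨ρ₁, t, rfl⟩ <;>
    rcases σ₂.eq_nil_or_concat' with rfl | ⟨ρ₂, u, rfl⟩
  · simp [listOp] at h
  · cases ρ₂ <;> simp [listOp] at h
  · cases ρ₁ <;> simp [listOp] at h
  · simp only [listOp_append_singleton, Option.bind_eq_some_iff, Option.map_eq_some_iff,
      List.append_singleton_inj] at h
    obtain ⟨cs, hρ, c, hc, rfl, rfl⟩ := h
    exact ⟨ρ₁, t, ρ₂, u, rfl, rfl, hρ, hc⟩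

end ListOp

theorem IsLocalCmd.exists_step_of_op_eq_some {α : Type} {A : SepAlg α} {c : α → Set α}
    (hloc : IsLocalCmd A c) {t u s s' : α} (hs : A.op t u = some s) (hs' : s' ∈ c s) :
    ∃ t' ∈ c t, A.op t' u = some s' := by
  have hstep : postP c {t} ⊆ c t := by
    rintro x ⟨_, rfl, hx⟩
    exact hx
  obtain ⟨t', ht', _, rfl, ht'u⟩ := hloc {t} (c t) {u} hstep ⟨s, ⟨t, rfl, u, rfl, hs⟩, hs'⟩
  exact ⟨t', ht', ht'u⟩

theorem stmt5_general {α : Type} (A : SepAlg α) (c : α → Set α) (hloc : IsLocalCmd A c)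
    (f : Set (List α)) (hf : Frameable f)
    (a : Set (List α)) :
    postP (lsem c) (hSep A.op a f) ⊆ hSep A.op (postP (lsem c) a) f := by
  rintro _ ⟨_, ⟨σ₁, hσ₁, σ₂, hσ₂, hop⟩, ρ, s₁, s₂, rfl, hs₂, rfl⟩
  obtain ⟨ρ₁, t, ρ₂, u, rfl, rfl, hρ, htu⟩ := exists_of_listOp_eq_some_append_singleton A.op hop
  obtain ⟨t', ht', ht'u⟩ := hloc.exists_step_of_op_eq_some htu hs₂
  refine ⟨ρ₁ ++ [t, t'], ⟨_, hσ₁, ρ₁, t, t', rfl, ht', rfl⟩, ρ₂ ++ [u, u], hf ρ₂ u hσ₂, ?_⟩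
  have hsnoc : ∀ (l : List α) (x y : α), l ++ [x, y] = l ++ [x] ++ [y] := by simp
  simp only [hsnoc, listOp_append_singleton, hρ, htu, ht'u, Option.bind_some, Option.map_some]

/-- for a local command semantics lifted to computation histories
and a frameable history predicate `f`, we have `⟦c⟧(a * f) ⊆ ⟦c⟧(a) * f`. -/
theorem stmt5 {α : Type} (A : SepAlg α) (c : α → Set α) (hloc : IsLocalCmd A c)
    (f : Set (List α)) (hfpos : ([] : List α) ∉ f) (hf : Frameable f)
    (a : Set (List α)) (hapos : ([] : List α) ∉ a) :
    postP (lsem c) (hSep A.op a f) ⊆ hSep A.op (postP (lsem c) a) f :=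
  stmt5_general A c hloc f hf a
end

section
/- Over a separation algebra Σ: (i) for every state predicate p ⊆ Σ, the now predicate now(p) and the past predicate past(p) are frameable; (ii) if history predicates a, b ⊆ Σ⁺ are frameable, then so are a * b, a ∩ b, and a ∪ b. -/
/-!
`now(p)` constrains only the last state, and `past(p)` is closed under appending any state.
The only case with content is `a * b`: if `σ·s = τ₁ * τ₂`, then `τ₁ = τ₁'·x` and `τ₂ = τ₂'·y` with
`s = x * y`, and duplicating `x` and `y` in the frameable factors yields `σ·s·s = τ₁'·x·x * τ₂'·y·y`.
-/

open Classical

section listOp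

variable {β : Type} (f : β → β → Option β)

theorem length_eq_of_listOp_eq_some {p q r : List β} (h : listOp f p q = some r) :
    p.length = r.length ∧ q.length = r.length := by
  induction p generalizing q r with
  | nil => cases q <;> simp_all [listOp]
  | cons a p ih =>
    cases q with
    | nil => simp [listOp] at h
    | cons b q =>
      simp only [listOp, Option.bind_eq_bind, Option.bind_eq_some_iff, Option.pure_def,
        Option.some.injEq] at h
      obtain ⟨c, -, r', hr', rfl⟩ := h
      simpa using ih hr'

theorem listOp_append_singleton_s6 {p q : List β} (hpq : p.length = q.length) (x y : β) :
    listOp f (p ++ [x]) (q ++ [y]) = (listOp f p q).bind fun r => (f x y).map (r ++ [·]) := by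
  induction p generalizing q with
  | nil =>
    rw [List.length_nil, eq_comm, List.length_eq_zero_iff] at hpq
    subst hpq
    cases hxy : f x y <;> simp [listOp, hxy]
  | cons a p ih =>
    obtain ⟨b, q, rfl⟩ := List.exists_cons_of_length_eq_add_one hpq.symm
    simp only [List.cons_append, listOp, ih (Nat.succ_injective hpq)]
    cases f a b <;> cases listOp f p q <;> cases f x y <;> simp

theorem listOp_append_singleton_of_eq_some {p q r : List β} {x y z : β}
    (h : listOp f p q = some r) (hxy : f x y = some z) :
    listOp f (p ++ [x]) (q ++ [y]) = some (r ++ [z]) := by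
  obtain ⟨hp, hq⟩ := length_eq_of_listOp_eq_some f h
  simp [listOp_append_singleton_s6 f (hp.trans hq.symm), h, hxy]

theorem exists_of_listOp_eq_some_append_singleton_s6 {p q r : List β} {z : β}
    (h : listOp f p q = some (r ++ [z])) :
    ∃ p' x q' y, p = p' ++ [x] ∧ q = q' ++ [y] ∧ listOp f p' q' = some r ∧ f x y = some z := by
  obtain ⟨hp, hq⟩ := length_eq_of_listOp_eq_some f h
  obtain ⟨p', x, rfl⟩ :=
    (List.eq_nil_or_concat' p).resolve_left (List.ne_nil_of_length_eq_add_one (by simpa using hp))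
  obtain ⟨q', y, rfl⟩ :=
    (List.eq_nil_or_concat' q).resolve_left (List.ne_nil_of_length_eq_add_one (by simpa using hq))
  rw [listOp_append_singleton_s6 f (by simpa using hp.trans hq.symm)] at h
  simp only [Option.bind_eq_some_iff, Option.map_eq_some_iff] at h
  obtain ⟨r', hr', z', hxy, hrz⟩ := h
  obtain ⟨rfl, hz⟩ := List.append_inj' hrz rfl
  obtain rfl := List.singleton_inj.mp hz
  exact ⟨p', x, q', y, rfl, rfl, hr', hxy⟩

end listOp

section Frameable

variable {β : Type} {a b : Set (List β)}

theorem frameable_nowP (p : Set β) : Frameable (nowP p) := by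
  rintro σ s ⟨ρ, t, ht, heq⟩
  obtain ⟨-, hst⟩ := List.append_inj' heq rfl
  obtain rfl := List.singleton_inj.mp hst
  exact ⟨σ ++ [s], s, ht, by simp⟩

theorem frameable_pastP (p : Set β) : Frameable (pastP p) := by
  rintro σ s ⟨ρ₁, t, ρ₂, ht, heq⟩
  refine ⟨ρ₁, t, ρ₂ ++ [s], ht, ?_⟩
  rw [← List.singleton_append, ← List.append_assoc, heq]
  simp

theorem Frameable.inter (ha : Frameable a) (hb : Frameable b) : Frameable (a ∩ b) :=
  fun σ s h => ⟨ha σ s h.1, hb σ s h.2⟩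

theorem Frameable.union (ha : Frameable a) (hb : Frameable b) : Frameable (a ∪ b) :=
  fun σ s h => h.imp (ha σ s) (hb σ s)

theorem Frameable.hSep (f : β → β → Option β) (ha : Frameable a) (hb : Frameable b) :
    Frameable (hSep f a b) := by
  rintro σ s ⟨τ₁, hτ₁, τ₂, hτ₂, hτ⟩
  obtain ⟨p, x, q, y, rfl, rfl, hpq, hxy⟩ := exists_of_listOp_eq_some_append_singleton_s6 f hτ
  refine ⟨p ++ [x, x], by simpa using ha p x hτ₁, q ++ [y, y], by simpa using hb q y hτ₂, ?_⟩
  simpa using listOp_append_singleton_of_eq_some f (listOp_append_singleton_of_eq_some f hpq hxy) hxy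

end Frameable

/-- (i) now and past predicates are frameable; (ii) frameability
is preserved by separating conjunction, intersection and union. -/
theorem stmt6 {α : Type} (A : SepAlg α) :
    (∀ p : Set α, Frameable (nowP p) ∧ Frameable (pastP p)) ∧
    (∀ a b : Set (List α), ([] : List α) ∉ a → ([] : List α) ∉ b →
      Frameable a → Frameable b →
      Frameable (hSep A.op a b) ∧ Frameable (a ∩ b) ∧ Frameable (a ∪ b)) :=
  ⟨fun p => ⟨frameable_nowP p, frameable_pastP p⟩,
    fun _ _ _ _ ha hb => ⟨ha.hSep A.op hb, ha.inter hb, ha.union hb⟩⟩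
end

section
/- Over a separation algebra Σ, let skip be the command with ⟦skip⟧(s) = {s} for all s ∈ Σ, lifted to histories. Then for every state predicate p ⊆ Σ: now(p) ⊆ wp(skip)(now(p) * past(p)). -/
open Classical

/-! Since `skip` stutters, `σ·s` becomes `σ·s·s`, which splits as `(1_σ)·1_s·s * σ·s·1_s`: the left
factor ends in `s ∈ p`, and the right one still carries `s ∈ p` one step back. -/

namespace SepAlg

variable {α : Type} (A : SepAlg α)

noncomputable def unitOf (s : α) : α := Classical.choose (A.unit_exists s)

theorem op_unitOf (s : α) : A.op s (A.unitOf s) = some s :=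
  (Classical.choose_spec (A.unit_exists s)).2

theorem unitOf_op (s : α) : A.op (A.unitOf s) s = some s :=
  (A.comm _ _).trans (A.op_unitOf s)

end SepAlg

theorem listOp_map_append {β : Type} (f : β → β → Option β) (u : β → β)
    (hu : ∀ t, f (u t) t = some t) (ρ τ τ' : List β) :
    listOp f (ρ.map u ++ τ) (ρ ++ τ') = (listOp f τ τ').map (ρ ++ ·) := by
  induction ρ with
  | nil => simp
  | cons a ρ ih => cases h : listOp f τ τ' <;> simp_all [listOp]

theorem lsem_append_singleton {α : Type} (f : α → Set α) (ρ : List α) (s : α) :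
    lsem f (ρ ++ [s]) = {τ | ∃ t ∈ f s, τ = ρ ++ [s, t]} := by
  ext τ
  simp only [lsem, List.append_singleton_inj, Set.mem_ofPred_eq]
  constructor
  · rintro ⟨ρ', s', t, ⟨rfl, rfl⟩, ht, rfl⟩
    exact ⟨t, ht, rfl⟩
  · rintro ⟨t, ht, rfl⟩
    exact ⟨ρ, s, t, ⟨rfl, rfl⟩, ht, rfl⟩

/-- a stuttering skip step can record the current state in a
past predicate: `now(p) ⊆ wp(skip)(now(p) * past(p))`. -/
theorem stmt10 {α : Type} (A : SepAlg α) (p : Set α) :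
    nowP p ⊆ hwp (fun s => ({s} : Set α)) (hSep A.op (nowP p) (pastP p)) := by
  rintro _ ⟨ρ, s, hs, rfl⟩
  refine ⟨by simp, ?_⟩
  rw [lsem_append_singleton]
  rintro _ ⟨t, ht, rfl⟩
  rw [Set.mem_singleton_iff] at ht
  subst t
  refine ⟨ρ.map A.unitOf ++ [A.unitOf s, s], ⟨ρ.map A.unitOf ++ [A.unitOf s], s, hs, by simp⟩,
    ρ ++ [s, A.unitOf s], ⟨ρ, s, [A.unitOf s], hs, rfl⟩, ?_⟩
  rw [listOp_map_append A.op A.unitOf A.unitOf_op]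
  simp [listOp, A.unitOf_op, A.op_unitOf]
end

section
/- Let Σ be a separation algebra and I a set of valuations; form the product separation algebra Σ × I where (s, i) # (t, j) iff s # t and i = j, with (s, i) * (t, i) := (s * t, i), and units emp × I. For p ⊆ Σ × I define the valuation-constant now and past predicates: now(p) := { ρ·(s, i) | ρ ∈ (Σ × {i})*, (s, i) ∈ p } and past(p) := { ρ₁·(s, i)·ρ₂ | ρ₁, ρ₂ ∈ (Σ × {i})*, (s, i) ∈ p }. Call p pure if p = Σ × J for some J ⊆ I. Then for every pure p ⊆ Σ × I and every q ⊆ Σ × I: now(p) * past(q) = past(p * q), where * on histories is the lifted pointwise composition in (Σ × I)⁺. -/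
open Classical

/-- Composition on the product separation algebra `Σ × I`:
`(s, i) # (t, j)` iff `s # t` and `i = j`, with `(s, i) * (t, i) = (s * t, i)`. -/
noncomputable def valOp {α ι : Type} (A : SepAlg α) (x y : α × ι) : Option (α × ι) :=
  if x.2 = y.2 then (A.op x.1 y.1).map (fun s => (s, x.2)) else none

/-- Separating conjunction of predicates over `Σ × I`. -/
noncomputable def valConj {α ι : Type} (A : SepAlg α) (p q : Set (α × ι)) :
    Set (α × ι) :=
  { z | ∃ a ∈ p, ∃ b ∈ q, valOp A a b = some z }

/-- The valuation-constant now predicate. -/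
def nowV {α ι : Type} (p : Set (α × ι)) : Set (List (α × ι)) :=
  { σ | ∃ (ρ : List (α × ι)) (s : α) (i : ι),
      (s, i) ∈ p ∧ (∀ x ∈ ρ, x.2 = i) ∧ σ = ρ ++ [(s, i)] }

/-- The valuation-constant past predicate. -/
def pastV {α ι : Type} (p : Set (α × ι)) : Set (List (α × ι)) :=
  { σ | ∃ (ρ₁ : List (α × ι)) (s : α) (i : ι) (ρ₂ : List (α × ι)),
      (s, i) ∈ p ∧ (∀ x ∈ ρ₁, x.2 = i) ∧ (∀ x ∈ ρ₂, x.2 = i) ∧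
      σ = ρ₁ ++ (s, i) :: ρ₂ }

/-- Pure predicates: those of the form `Σ × J`. -/
def IsPure {α ι : Type} (p : Set (α × ι)) : Prop :=
  ∃ J : Set ι, p = { x : α × ι | x.2 ∈ J }

/-! Composition of histories over `Σ × I` is pointwise and preserves valuations, so every
history in `now(p) * past(q)` lives in a single valuation `i`; the state of the `now(p)`-history
lying under the distinguished `q`-state then has valuation `i ∈ J`, hence lies in the pure `p`.
Conversely, a `(p * q)`-state `a * b` of a past-history is split by keeping `b` in the history
and putting `a` into a history of units of the same valuation, which lies in `now(p)`. -/

section ListOp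

variable {β : Type} {f : β → β → Option β}

lemma listOp_nil_left_eq_some_iff {bs cs : List β} :
    listOp f [] bs = some cs ↔ bs = [] ∧ cs = [] := by
  cases bs <;> simp [listOp, eq_comm]

lemma listOp_cons_left_eq_some_iff {a : β} {as bs cs : List β} :
    listOp f (a :: as) bs = some cs ↔
      ∃ b bs' c cs', bs = b :: bs' ∧ f a b = some c ∧
        listOp f as bs' = some cs' ∧ cs = c :: cs' := by
  cases bs with
  | nil => simp [listOp]
  | cons b bs' =>
    simp only [listOp, Option.bind_eq_bind, Option.bind_eq_some_iff, Option.pure_def,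
      Option.some.injEq, List.cons.injEq]
    constructor
    · rintro ⟨c, hc, cs', hcs', rfl⟩
      exact ⟨b, bs', c, cs', ⟨rfl, rfl⟩, hc, hcs', rfl⟩
    · rintro ⟨b, bs', c, cs', ⟨rfl, rfl⟩, hc, hcs', rfl⟩
      exact ⟨c, hc, cs', hcs', rfl⟩

lemma listOp_append {as₁ bs₁ cs₁ as₂ bs₂ cs₂ : List β}
    (h₁ : listOp f as₁ bs₁ = some cs₁) (h₂ : listOp f as₂ bs₂ = some cs₂) :
    listOp f (as₁ ++ as₂) (bs₁ ++ bs₂) = some (cs₁ ++ cs₂) := by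
  induction as₁ generalizing bs₁ cs₁ with
  | nil =>
    obtain ⟨rfl, rfl⟩ := listOp_nil_left_eq_some_iff.1 h₁
    exact h₂
  | cons a as ih =>
    obtain ⟨b, bs', c, cs', rfl, hc, hcs', rfl⟩ := listOp_cons_left_eq_some_iff.1 h₁
    exact listOp_cons_left_eq_some_iff.2 ⟨b, bs' ++ bs₂, c, cs' ++ cs₂, rfl, hc, ih hcs', rfl⟩

lemma listOp_append_left_eq_some {as₁ as₂ bs cs : List β}
    (h : listOp f (as₁ ++ as₂) bs = some cs) :
    ∃ bs₁ bs₂ cs₁ cs₂, bs = bs₁ ++ bs₂ ∧ cs = cs₁ ++ cs₂ ∧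
      listOp f as₁ bs₁ = some cs₁ ∧ listOp f as₂ bs₂ = some cs₂ := by
  induction as₁ generalizing bs cs with
  | nil => exact ⟨[], bs, [], cs, rfl, rfl, rfl, h⟩
  | cons a as ih =>
    obtain ⟨b, bs', c, cs', rfl, hc, hcs', rfl⟩ := listOp_cons_left_eq_some_iff.1 h
    obtain ⟨bs₁, bs₂, cs₁, cs₂, rfl, rfl, h₁, h₂⟩ := ih hcs'
    exact ⟨b :: bs₁, bs₂, c :: cs₁, cs₂, rfl, rfl,
      listOp_cons_left_eq_some_iff.2 ⟨b, bs₁, c, cs₁, rfl, hc, h₁, rfl⟩, h₂⟩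

lemma listOp_comm (hf : ∀ a b, f a b = f b a) : ∀ as bs, listOp f as bs = listOp f bs as
  | [], [] | [], _ :: _ | _ :: _, [] => rfl
  | a :: as, b :: bs => by simp [listOp, hf a b, listOp_comm hf as bs]

lemma exists_listOp_eq_some_self (hf : ∀ b, ∃ e, f e b = some b) :
    ∀ l : List β, ∃ u, listOp f u l = some l
  | [] => ⟨[], rfl⟩
  | b :: l => by
    obtain ⟨e, he⟩ := hf b
    obtain ⟨u, hu⟩ := exists_listOp_eq_some_self hf l
    exact ⟨e :: u, listOp_cons_left_eq_some_iff.2 ⟨b, l, b, l, rfl, he, hu, rfl⟩⟩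

lemma map_eq_of_listOp_eq_some {γ : Type} (g : β → γ)
    (hg : ∀ a b c, f a b = some c → g a = g c ∧ g b = g c) {as bs cs : List β}
    (h : listOp f as bs = some cs) : as.map g = cs.map g ∧ bs.map g = cs.map g := by
  induction as generalizing bs cs with
  | nil =>
    obtain ⟨rfl, rfl⟩ := listOp_nil_left_eq_some_iff.1 h
    exact ⟨rfl, rfl⟩
  | cons a as ih =>
    obtain ⟨b, bs', c, cs', rfl, hc, hcs', rfl⟩ := listOp_cons_left_eq_some_iff.1 h
    obtain ⟨ha, hb⟩ := hg a b c hc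
    obtain ⟨has, hbs⟩ := ih hcs'
    simp [ha, hb, has, hbs]

end ListOp

section Valuations

variable {α ι : Type} (A : SepAlg α)

lemma valOp_eq_some_iff {x y z : α × ι} :
    valOp A x y = some z ↔ x.2 = y.2 ∧ z.2 = x.2 ∧ A.op x.1 y.1 = some z.1 := by
  obtain ⟨z₁, z₂⟩ := z
  unfold valOp
  split_ifs with hxy
  · simp only [Option.map_eq_some_iff, Prod.mk.injEq]
    constructor
    · rintro ⟨s, hs, rfl, rfl⟩
      exact ⟨hxy, rfl, hs⟩
    · rintro ⟨-, rfl, hs⟩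
      exact ⟨z₁, hs, rfl, rfl⟩
  · simp [hxy]

lemma valOp_comm (x y : α × ι) : valOp A x y = valOp A y x := by
  unfold valOp
  by_cases h : x.2 = y.2
  · simp [h, A.comm]
  · simp [h, Ne.symm h]

lemma exists_valOp_eq_some_self (x : α × ι) : ∃ e, valOp A e x = some x := by
  obtain ⟨u, -, hu⟩ := A.unit_exists x.1
  exact ⟨(u, x.2), (valOp_eq_some_iff A).2 ⟨rfl, rfl, A.comm u x.1 ▸ hu⟩⟩

lemma map_snd_eq_of_listOp_valOp_eq_some {as bs cs : List (α × ι)}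
    (h : listOp (valOp A) as bs = some cs) :
    as.map Prod.snd = cs.map Prod.snd ∧ bs.map Prod.snd = cs.map Prod.snd :=
  map_eq_of_listOp_eq_some Prod.snd (fun _ _ _ hc => by
    obtain ⟨hxy, hz, -⟩ := (valOp_eq_some_iff A).1 hc
    exact ⟨hz.symm, hxy ▸ hz.symm⟩) h

lemma forall_snd_eq_of_map_snd_eq {l l' : List (α × ι)} {i : ι}
    (h : l.map Prod.snd = l'.map Prod.snd) (hl : ∀ x ∈ l, x.2 = i) : ∀ x ∈ l', x.2 = i := by
  intro x hx
  obtain ⟨y, hy, hyx⟩ := List.mem_map.1 (h ▸ List.mem_map_of_mem (f := Prod.snd) hx)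
  exact hyx ▸ hl y hy

lemma mem_pastV_iff {p : Set (α × ι)} {σ : List (α × ι)} :
    σ ∈ pastV p ↔ ∃ ρ₁ c ρ₂, c ∈ p ∧ (∀ x ∈ σ, x.2 = c.2) ∧ σ = ρ₁ ++ c :: ρ₂ := by
  constructor
  · rintro ⟨ρ₁, s, i, ρ₂, hp, h₁, h₂, rfl⟩
    refine ⟨ρ₁, (s, i), ρ₂, hp, ?_, rfl⟩
    simp only [List.mem_append, List.mem_cons]
    rintro x (hx | rfl | hx)
    exacts [h₁ x hx, rfl, h₂ x hx]
  · rintro ⟨ρ₁, ⟨s, i⟩, ρ₂, hp, h, rfl⟩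
    exact ⟨ρ₁, s, i, ρ₂, hp, fun x hx => h x (by simp [hx]),
      fun x hx => h x (by simp [hx]), rfl⟩

lemma mem_nowV_setOf_snd_mem_iff {J : Set ι} {σ : List (α × ι)} :
    σ ∈ nowV {x : α × ι | x.2 ∈ J} ↔ σ ≠ [] ∧ ∃ i ∈ J, ∀ x ∈ σ, x.2 = i := by
  constructor
  · rintro ⟨ρ, s, i, hi, hρ, rfl⟩
    refine ⟨by simp, i, hi, ?_⟩
    simp only [List.mem_append, List.mem_singleton]
    rintro x (hx | rfl)
    exacts [hρ x hx, rfl]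
  · rintro ⟨hne, i, hi, h⟩
    obtain ⟨ρ, c, rfl⟩ := (List.eq_nil_or_concat σ).resolve_left hne
    have hc : c.2 = i := h c (by simp)
    refine ⟨ρ, c.1, i, hi, fun x hx => h x (by simp [hx]), ?_⟩
    rw [← hc]
    simp

end Valuations

section Hindsight

variable {α ι : Type} (A : SepAlg α) (J : Set ι) (q : Set (α × ι))

lemma hSep_nowV_pastV_subset :
    hSep (valOp A) (nowV {x : α × ι | x.2 ∈ J}) (pastV q) ⊆
      pastV (valConj A {x : α × ι | x.2 ∈ J} q) := by
  rintro σ ⟨τ₁, hτ₁, τ₂, hτ₂, hσ⟩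
  obtain ⟨-, i, hi, hτ₁i⟩ := mem_nowV_setOf_snd_mem_iff.1 hτ₁
  obtain ⟨ρ₁, b, ρ₂, hb, -, rfl⟩ := mem_pastV_iff.1 hτ₂
  have hσi : ∀ x ∈ σ, x.2 = i :=
    forall_snd_eq_of_map_snd_eq (map_snd_eq_of_listOp_valOp_eq_some A hσ).1 hτ₁i
  rw [listOp_comm (valOp_comm A)] at hσ
  obtain ⟨ν₁, ν₂, σ₁, σ₂, rfl, rfl, -, hσ₂⟩ := listOp_append_left_eq_some hσ
  obtain ⟨a, ν₂', c, σ₂', rfl, hbac, -, rfl⟩ := listOp_cons_left_eq_some_iff.1 hσ₂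
  have hci : c.2 = i := hσi c (by simp)
  have hai : a.2 = i := hτ₁i a (by simp)
  refine mem_pastV_iff.2 ⟨σ₁, c, σ₂', ?_, fun x hx => hci ▸ hσi x hx, rfl⟩
  exact ⟨a, show a.2 ∈ J from hai ▸ hi, b, hb, valOp_comm A a b ▸ hbac⟩

lemma pastV_valConj_subset_hSep :
    pastV (valConj A {x : α × ι | x.2 ∈ J} q) ⊆
      hSep (valOp A) (nowV {x : α × ι | x.2 ∈ J}) (pastV q) := by
  intro σ hσ
  obtain ⟨ρ₁, c, ρ₂, ⟨a, ha, b, hb, habc⟩, hσc, rfl⟩ := mem_pastV_iff.1 hσ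
  obtain ⟨hab, hca, -⟩ := (valOp_eq_some_iff A).1 habc
  obtain ⟨u₁, hu₁⟩ := exists_listOp_eq_some_self (exists_valOp_eq_some_self A) ρ₁
  obtain ⟨u₂, hu₂⟩ := exists_listOp_eq_some_self (exists_valOp_eq_some_self A) ρ₂
  have hτ : listOp (valOp A) (u₁ ++ a :: u₂) (ρ₁ ++ b :: ρ₂) = some (ρ₁ ++ c :: ρ₂) :=
    listOp_append hu₁ (listOp_cons_left_eq_some_iff.2 ⟨b, ρ₂, c, ρ₂, rfl, habc, hu₂, rfl⟩)
  obtain ⟨hτ₁, hτ₂⟩ := map_snd_eq_of_listOp_valOp_eq_some A hτ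
  refine ⟨u₁ ++ a :: u₂, ?_, ρ₁ ++ b :: ρ₂, ?_, hτ⟩
  · exact mem_nowV_setOf_snd_mem_iff.2 ⟨by simp, a.2, ha,
      forall_snd_eq_of_map_snd_eq hτ₁.symm (hca ▸ hσc)⟩
  · exact mem_pastV_iff.2 ⟨ρ₁, b, ρ₂, hb,
      forall_snd_eq_of_map_snd_eq hτ₂.symm (hab ▸ hca ▸ hσc), rfl⟩

end Hindsight

/-- hindsight: if `p` is pure then
`now(p) * past(q) = past(p * q)`. -/
theorem stmt11 {α ι : Type} (A : SepAlg α) (p q : Set (α × ι)) (hp : IsPure p) :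
    hSep (valOp A) (nowV p) (pastV q) = pastV (valConj A p q) := by
  obtain ⟨J, rfl⟩ := hp
  exact (hSep_nowV_pastV_subset A J q).antisymm (pastV_valConj_subset_hSep A J q)
end
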